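/- Fix a finite nonempty alphabet Σ equipped with a linear order, and let Ξ := Σ ⊕ Σ'' ⊕ Sym with φ : FL_Σ → Ξ* the canonical encoding. Define the acceptances relation acc_Σ ⊆ FL_Σ × (Σ* × (Finset Σ ∪ {•})), relating the observation ⟨A₀,a₁,…,aₙ,Aₙ⟩ to the single pair (a₁…aₙ, Aₙ). Let Θ := Σ ⊕ Σ'' ⊕ Sym and define ψ by: ψ(s, •) = s, and ψ(s, A) = s followed by the symbol ⟨, the double-primed copies of the elements of A in increasing order, and the symbol ⟩. Then: (a) there exists a nondeterministic finite automaton with finitely many states over the alphabet Ξ ⊕ Θ recognising the relation {(φ(x), ψ(y)) : (x, y) ∈ acc_Σ}; and (b) ψ is order-reflecting, i.e. whenever ψ(y₁) is a prefix of ψ(y₂) then y₁ ≼ y₂, where ≼ is the relation induced by acc_Σ from the extension order on FL_Σ. -/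

import Mathlib

/-- A finite linear observation over alphabet `α`: an initial annotation `A₀`
(`none` = `•`, `some A` = a stable acceptance set) together with a list of pairs
`(aᵢ, Aᵢ)` of an event and the following annotation. -/
abbrev FLObs (α : Type) := Option (Finset α) × List (α × Option (Finset α))

/-- Extension on annotations: either they are equal or the first is `•`. -/
def optExt {α : Type} (A B : Option (Finset α)) : Prop := A = B ∨ A = none

/-- The extension order on finite linear observations. -/
def extLE {α : Type} (u v : FLObs α) : Prop :=
  optExt u.1 v.1 ∧ u.2.length ≤ v.2.length ∧
    ∀ (i : ℕ) (hi : i < u.2.length) (hj : i < v.2.length),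
      (u.2.get ⟨i, hi⟩).1 = (v.2.get ⟨i, hj⟩).1 ∧
        optExt (u.2.get ⟨i, hi⟩).2 (v.2.get ⟨i, hj⟩).2

/-- The four symbols `⟨`, `⟩`, `,`, `•` used by the canonical encoding. -/
inductive MSym : Type
  | lang | rang | comma | bullet
deriving DecidableEq

instance instFintypeMSym : Fintype MSym :=
  ⟨{MSym.lang, MSym.rang, MSym.comma, MSym.bullet}, fun x => by cases x <;> simp⟩

/-- The alphabet `Ξ = Σ ⊕ Σ'' ⊕ MSym` of the canonical encoding: `Sum.inl a` is the
event `a`, `Sum.inr (Sum.inl a)` is the double-primed copy `a''`, and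
`Sum.inr (Sum.inr s)` is a symbol. -/
abbrev Xi (α : Type) := α ⊕ α ⊕ MSym

/-- Encoding of an annotation: `•` is the symbol `•`, a set is the list of the
double-primed copies of its elements in increasing order. -/
def encAnnXi {α : Type} [LinearOrder α] : Option (Finset α) → List (Xi α)
  | none => [Sum.inr (Sum.inr MSym.bullet)]
  | some A => (A.sort (· ≤ ·)).map (fun a => Sum.inr (Sum.inl a))

/-- The canonical encoding `φ` of finite linear observations: the observation
`⟨A₀, a₁, A₁, …, aₙ, Aₙ⟩` is written as the string `⟨ A₀ , a₁ , A₁ , … , aₙ , Aₙ ⟩`. -/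
def phi {α : Type} [LinearOrder α] (u : FLObs α) : List (Xi α) :=
  [Sum.inr (Sum.inr MSym.lang)] ++ encAnnXi u.1 ++
    (u.2.map (fun p => [Sum.inr (Sum.inr MSym.comma), Sum.inl p.1,
      Sum.inr (Sum.inr MSym.comma)] ++ encAnnXi p.2)).flatten ++
    [Sum.inr (Sum.inr MSym.rang)]

/-- An NFA over `α ⊕ β` recognises a relation `R ⊆ α* × β*` if `R s t` holds exactly
when the NFA accepts some interleaving of `s` (as left letters) and `t` (as right
letters). -/
def Recognises {α β Q : Type} (A : NFA (α ⊕ β) Q) (R : List α → List β → Prop) : Prop :=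
  ∀ (s : List α) (t : List β),
    R s t ↔ ∃ w ∈ A.accepts, w.filterMap Sum.getLeft? = s ∧ w.filterMap Sum.getRight? = t

/-- The relation on `O` induced by a relation `M : S → O → Prop` from a preorder
`le` on `S`. -/
def inducedRel {S O : Type} (le : S → S → Prop) (M : S → O → Prop) (y₁ y₂ : O) : Prop :=
  ∀ b, M b y₂ → ∃ a, M a y₁ ∧ le a b

/-- The final annotation `Aₙ` of an observation. -/
def lastAnn {α : Type} (u : FLObs α) : Option (Finset α) :=
  match u.2.getLast? with
  | none => u.1
  | some p => p.2


/-- The acceptances relation: it relates `⟨A₀,a₁,…,aₙ,Aₙ⟩` to the single pair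
`(a₁…aₙ, Aₙ)`. -/
def accRel {α : Type} (u : FLObs α) (y : List α × Option (Finset α)) : Prop :=
  y.1 = u.2.map Prod.fst ∧ y.2 = lastAnn u

/-- The output alphabet `Θ = Σ ⊕ Σ'' ⊕ Sym` for acceptances: `Sum.inl a` is the event
`a`, `Sum.inr (Sum.inl a)` is the double-primed copy `a''`, `Sum.inr (Sum.inr s)` a
symbol. -/
abbrev ThetaA (α : Type) := α ⊕ α ⊕ MSym

/-- The output encoding for acceptances: `ψ (s, •) = s` and `ψ (s, A) = s ⟨ A'' ⟩`
with the elements of `A` double-primed, in increasing order. -/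
def psiA {α : Type} [LinearOrder α] (y : List α × Option (Finset α)) : List (ThetaA α) :=
  y.1.map Sum.inl ++
    (match y.2 with
     | none => []
     | some A => [Sum.inr (Sum.inr MSym.lang)] ++
         (A.sort (· ≤ ·)).map (fun a => Sum.inr (Sum.inl a)) ++ [Sum.inr (Sum.inr MSym.rang)])

/-!
(a) Write `φ x` and `ψ (acc x)` interleaved, block by block: a block carries an annotation of `x`
followed by the next event, which it emits on both tapes at once; the final block also copies the
last annotation onto the output tape. These words form the language `{⟨} · M∗ · F` with `M`, `F`
finite (as `Σ` is), which is regular, since by Myhill–Nerode regular languages are closed under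
concatenation and star: a left quotient of `L₁ * L₂` or of `L∗` is determined by finitely many
left quotients of `L₁`, `L₂`, `L`.

(b) If `ψ y₁` is a prefix of `ψ y₂`, then either `y₁ = y₂`, or `y₁ = (s, •)` with `s` a prefix of
the trace of `y₂`; in the latter case the observation of `s` with all stability information
forgotten lies below every observation related to `y₂`.
-/

open Computability

namespace Language

variable {T : Type*}

theorem IsRegular.of_finite {L : Language T} (h : Set.Finite (L : Set (List T))) :
    L.IsRegular := by
  apply IsRegular.of_finite_range_leftQuotient
  have hsuffixes : {v : List T | ∃ x ∈ L, v <:+ x}.Finite :=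
    (h.biUnion fun x _ => x.tails.finite_toSet).subset fun v ⟨x, hx, hv⟩ =>
      Set.mem_biUnion hx ((List.mem_tails _ _).2 hv)
  refine hsuffixes.finite_subsets.subset ?_
  rintro _ ⟨u, rfl⟩ v hv
  exact ⟨u ++ v, hv, List.suffix_append u v⟩

theorem append_mem_mul_iff {L₁ L₂ : Language T} {u y : List T} :
    u ++ y ∈ L₁ * L₂ ↔
      y ∈ L₁.leftQuotient u * L₂ ∨ ∃ p ∈ L₁, ∃ v, p ++ v = u ∧ v ++ y ∈ L₂ := by
  simp only [mem_mul, mem_leftQuotient]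
  constructor
  · rintro ⟨a, ha, b, hb, hab⟩
    rcases List.append_eq_append_iff.1 hab with ⟨v, rfl, rfl⟩ | ⟨c, rfl, rfl⟩
    · exact .inr ⟨a, ha, v, rfl, hb⟩
    · exact .inl ⟨c, ha, b, hb, rfl⟩
  · rintro (⟨c, hc, b, hb, rfl⟩ | ⟨p, hp, v, rfl, hv⟩)
    · exact ⟨u ++ c, hc, b, hb, List.append_assoc _ _ _⟩
    · exact ⟨p, hp, v ++ y, hv, (List.append_assoc _ _ _).symm⟩

theorem IsRegular.mul {L₁ L₂ : Language T} (h₁ : L₁.IsRegular) (h₂ : L₂.IsRegular) :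
    (L₁ * L₂).IsRegular := by
  rw [isRegular_iff_finite_range_leftQuotient] at *
  let F : Language T × Set (Language T) → Language T := fun K =>
    {y | y ∈ K.1 * L₂ ∨ ∃ M ∈ K.2, y ∈ M}
  refine ((h₁.prod h₂.finite_subsets).image F).subset ?_
  rintro _ ⟨u, rfl⟩
  refine ⟨(L₁.leftQuotient u, L₂.leftQuotient '' {v | ∃ p ∈ L₁, p ++ v = u}),
    ⟨⟨u, rfl⟩, Set.image_subset_range _ _⟩, ?_⟩
  ext y
  rw [mem_leftQuotient, append_mem_mul_iff]
  exact or_congr_right (by aesop)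

theorem append_mem_kstar_iff {L : Language T} {u y : List T} :
    u ++ y ∈ L∗ ↔
      (y = [] ∧ u ∈ L∗) ∨ ∃ p ∈ L∗, ∃ q, p ++ q = u ∧ y ∈ L.leftQuotient q * L∗ := by
  constructor
  · intro h
    by_cases hy : y = []
    · subst hy
      exact .inl ⟨rfl, by simpa using h⟩
    right
    obtain ⟨W, hW, hWL⟩ := mem_kstar.1 h
    clear h
    induction W generalizing u with
    | nil => exact (hy (List.append_eq_nil_iff.1 hW).2).elim
    | cons w W ih =>
      rw [List.flatten_cons] at hW
      rcases List.append_eq_append_iff.1 hW with ⟨r, hw, hr⟩ | ⟨c, rfl, hc⟩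
      · refine ⟨[], nil_mem_kstar L, u, rfl, hr ▸ append_mem_mul ?_
          (join_mem_kstar fun z hz => hWL z (by simp [hz]))⟩
        rw [mem_leftQuotient, ← hw]
        exact hWL w (by simp)
      · obtain ⟨p, hp, q, rfl, hq⟩ := ih hc.symm fun z hz => hWL z (by simp [hz])
        refine ⟨w ++ p, ?_, q, List.append_assoc _ _ _, hq⟩
        rw [← kstar_mul_kstar L]
        exact append_mem_mul ((show L ≤ L∗ from le_kstar) (hWL w (by simp))) hp
  · rintro (⟨rfl, hu⟩ | ⟨p, hp, q, rfl, r, hr, z, hz, rfl⟩)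
    · simpa using hu
    · rw [List.append_assoc, ← List.append_assoc q, ← kstar_mul_kstar L]
      refine append_mem_mul hp ?_
      rw [← kstar_mul_kstar L]
      exact append_mem_mul ((show L ≤ L∗ from le_kstar) hr) hz

theorem IsRegular.kstar {L : Language T} (h : L.IsRegular) : L∗.IsRegular := by
  rw [isRegular_iff_finite_range_leftQuotient] at *
  let F : Prop × Set (Language T) → Language T := fun K =>
    {y | (y = [] ∧ K.1) ∨ ∃ M ∈ K.2, y ∈ M * L∗}
  refine ((Set.finite_univ.prod h.finite_subsets).image F).subset ?_
  rintro _ ⟨u, rfl⟩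
  refine ⟨(u ∈ L∗, L.leftQuotient '' {q | ∃ p ∈ L∗, p ++ q = u}),
    ⟨Set.mem_univ _, Set.image_subset_range _ _⟩, ?_⟩
  ext y
  rw [mem_leftQuotient, append_mem_kstar_iff]
  exact or_congr_right (by aesop)

theorem IsRegular.exists_nfa_fin {L : Language T} (h : L.IsRegular) :
    ∃ (n : ℕ) (M : NFA T (Fin n)), M.accepts = L := by
  obtain ⟨σ, _, M, rfl⟩ := h
  exact ⟨_, (M.reindex (Fintype.equivFin σ)).toNFA, by simp [DFA.accepts_reindex]⟩

end Language

namespace List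

variable {β γ : Type*} (l : List β)

@[simp]
theorem filterMap_getLeft?_map_inl :
    (l.map (Sum.inl : β → β ⊕ γ)).filterMap Sum.getLeft? = l := by
  induction l <;> simp_all

@[simp]
theorem filterMap_getRight?_map_inr :
    (l.map (Sum.inr : β → γ ⊕ β)).filterMap Sum.getRight? = l := by
  induction l <;> simp_all

theorem eq_of_append_cons_eq_append_cons {p : β → Bool} {l₁ l₂ r₁ r₂ : List β} {c : β}
    (h₁ : ∀ x ∈ l₁, p x) (h₂ : ∀ x ∈ l₂, p x) (hc : p c = false)
    (h : l₁ ++ c :: r₁ = l₂ ++ c :: r₂) : l₁ = l₂ ∧ r₁ = r₂ := by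
  have hl : l₁ = l₂ := by
    simpa [takeWhile_append_of_pos h₁, takeWhile_append_of_pos h₂, takeWhile_cons_of_neg, hc]
      using congrArg (takeWhile p) h
  subst hl
  exact ⟨rfl, (cons.inj (append_cancel_left h)).2⟩

end List

namespace Acceptances

variable {α : Type}

theorem lastAnn_cons (A A' : Option (Finset α)) (a : α) (l : List (α × Option (Finset α))) :
    lastAnn (A, (a, A') :: l) = lastAnn (A', l) := by
  cases l <;> simp [lastAnn, List.getLast?_cons]

theorem extLE_refl (u : FLObs α) : extLE u u :=
  ⟨.inl rfl, le_rfl, fun _ _ _ => ⟨rfl, .inl rfl⟩⟩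

def unstableObs (s : List α) : FLObs α := (none, s.map fun a => (a, none))

theorem accRel_unstableObs (s : List α) : accRel (unstableObs s) (s, none) := by
  refine ⟨by simp [unstableObs, Function.comp_def], ?_⟩
  simp only [lastAnn, unstableObs, List.getLast?_map]
  cases s.getLast? <;> rfl

theorem extLE_unstableObs {s : List α} {u : FLObs α} (h : s <+: u.2.map Prod.fst) :
    extLE (unstableObs s) u := by
  refine ⟨.inr rfl, by simpa [unstableObs] using h.length_le,
    fun i hi _ => ⟨?_, .inr (by simp [unstableObs])⟩⟩
  simpa [unstableObs] using h.getElem (by simpa [unstableObs] using hi)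

variable [LinearOrder α]

def encAnnTheta : Option (Finset α) → List (ThetaA α)
  | none => []
  | some A => [Sum.inr (Sum.inr MSym.lang)] ++
      (A.sort (· ≤ ·)).map (fun a => Sum.inr (Sum.inl a)) ++ [Sum.inr (Sum.inr MSym.rang)]

theorem psiA_eq (y : List α × Option (Finset α)) :
    psiA y = y.1.map Sum.inl ++ encAnnTheta y.2 := by
  obtain ⟨s, _ | A⟩ := y <;> rfl

theorem filterMap_getLeft?_psiA (y : List α × Option (Finset α)) :
    (psiA y).filterMap Sum.getLeft? = y.1 := by
  obtain ⟨s, _ | A⟩ := y <;>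
    simp [psiA_eq, encAnnTheta, List.filterMap_cons, -List.filterMap_map]

/-- Within a block the order of the letters is immaterial, as `Recognises` only looks at the two
projections; what matters is that the event `a` is written on both tapes in the same block. -/
def midBlock (A : Option (Finset α)) (a : α) : List (Xi α ⊕ ThetaA α) :=
  (encAnnXi A ++ [Sum.inr (Sum.inr MSym.comma), Sum.inl a, Sum.inr (Sum.inr MSym.comma)]).map
    Sum.inl ++ [Sum.inr (Sum.inl a)]

def lastBlock (A : Option (Finset α)) : List (Xi α ⊕ ThetaA α) :=
  (encAnnXi A ++ [Sum.inr (Sum.inr MSym.rang)]).map Sum.inl ++ (encAnnTheta A).map Sum.inr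

def blocks : Option (Finset α) → List (α × Option (Finset α)) → List (Xi α ⊕ ThetaA α)
  | A, [] => lastBlock A
  | A, (a, A') :: l => midBlock A a ++ blocks A' l

def accWord (x : FLObs α) : List (Xi α ⊕ ThetaA α) :=
  Sum.inl (Sum.inr (Sum.inr MSym.lang)) :: blocks x.1 x.2

theorem filterMap_getLeft?_blocks (A : Option (Finset α)) (l : List (α × Option (Finset α))) :
    (blocks A l).filterMap Sum.getLeft? =
      encAnnXi A ++ (l.map fun p => [Sum.inr (Sum.inr MSym.comma), Sum.inl p.1,
        Sum.inr (Sum.inr MSym.comma)] ++ encAnnXi p.2).flatten ++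
      [Sum.inr (Sum.inr MSym.rang)] := by
  induction l generalizing A with
  | nil => simp [blocks, lastBlock, -List.filterMap_map]
  | cons p l ih => simp [blocks, midBlock, ih, List.filterMap_cons, -List.filterMap_map]

theorem filterMap_getLeft?_accWord (x : FLObs α) :
    (accWord x).filterMap Sum.getLeft? = phi x := by
  simp [accWord, phi, filterMap_getLeft?_blocks]

theorem filterMap_getRight?_blocks (A : Option (Finset α)) (l : List (α × Option (Finset α))) :
    (blocks A l).filterMap Sum.getRight? = psiA (l.map Prod.fst, lastAnn (A, l)) := by
  induction l generalizing A with
  | nil =>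
    simp [blocks, lastBlock, psiA_eq, lastAnn, List.filterMap_cons, -List.filterMap_map]
  | cons p l ih =>
    obtain ⟨a, A'⟩ := p
    simp [blocks, midBlock, ih, psiA_eq, lastAnn_cons, List.filterMap_cons,
      -List.filterMap_map]

theorem filterMap_getRight?_accWord (x : FLObs α) :
    (accWord x).filterMap Sum.getRight? = psiA (x.2.map Prod.fst, lastAnn x) := by
  simp [accWord, filterMap_getRight?_blocks, List.filterMap_cons]

def midBlocks : Language (Xi α ⊕ ThetaA α) :=
  Set.range fun p : Option (Finset α) × α => midBlock p.1 p.2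

def lastBlocks : Language (Xi α ⊕ ThetaA α) := Set.range lastBlock

theorem blocks_mem_midBlocks_kstar_mul_lastBlocks (A : Option (Finset α))
    (l : List (α × Option (Finset α))) : blocks A l ∈ midBlocks∗ * lastBlocks := by
  induction l generalizing A with
  | nil =>
    exact Language.mem_mul.2 ⟨[], Language.nil_mem_kstar _, lastBlock A, ⟨A, rfl⟩, rfl⟩
  | cons p l ih =>
    obtain ⟨a, A'⟩ := p
    obtain ⟨u, hu, v, hv, huv⟩ := Language.mem_mul.1 (ih A')
    obtain ⟨U, rfl, hU⟩ := Language.mem_kstar.1 hu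
    refine Language.mem_mul.2
      ⟨(midBlock A a :: U).flatten, Language.join_mem_kstar ?_, v, hv, ?_⟩
    · rintro k (_ | ⟨_, hk⟩)
      exacts [⟨(A, a), rfl⟩, hU k hk]
    · simp [blocks, ← huv]

theorem exists_blocks_eq_of_mem {w : List (Xi α ⊕ ThetaA α)}
    (hw : w ∈ midBlocks∗ * lastBlocks) : ∃ A l, blocks A l = w := by
  obtain ⟨u, hu, v, ⟨B, rfl⟩, rfl⟩ := Language.mem_mul.1 hw
  obtain ⟨U, rfl, hU⟩ := Language.mem_kstar.1 hu
  clear hw hu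
  induction U with
  | nil => exact ⟨B, [], by simp [blocks]⟩
  | cons k U ih =>
    obtain ⟨⟨A, a⟩, rfl⟩ := hU k (by simp)
    obtain ⟨A', l, hl⟩ := ih fun k hk => hU k (by simp [hk])
    exact ⟨A, (a, A') :: l, by simp [blocks, hl]⟩

def accLanguage : Language (Xi α ⊕ ThetaA α) :=
  {[Sum.inl (Sum.inr (Sum.inr MSym.lang))]} * (midBlocks∗ * lastBlocks)

theorem mem_accLanguage_iff {w : List (Xi α ⊕ ThetaA α)} :
    w ∈ accLanguage ↔ ∃ x, accWord x = w := by
  simp only [accLanguage, Language.mem_mul]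
  constructor
  · rintro ⟨_, rfl, b, hb, rfl⟩
    obtain ⟨A, l, rfl⟩ := exists_blocks_eq_of_mem hb
    exact ⟨(A, l), rfl⟩
  · rintro ⟨x, rfl⟩
    exact ⟨_, rfl, _, blocks_mem_midBlocks_kstar_mul_lastBlocks x.1 x.2, rfl⟩

theorem isRegular_accLanguage [Fintype α] :
    (accLanguage : Language (Xi α ⊕ ThetaA α)).IsRegular :=
  (Language.IsRegular.of_finite (Set.finite_singleton _)).mul
    ((Language.IsRegular.of_finite (Set.finite_range _)).kstar.mul
      (Language.IsRegular.of_finite (Set.finite_range _)))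

theorem eq_or_prefix_of_psiA_prefix {y₁ y₂ : List α × Option (Finset α)}
    (h : psiA y₁ <+: psiA y₂) : y₁ = y₂ ∨ (y₁.2 = none ∧ y₁.1 <+: y₂.1) := by
  obtain ⟨s₁, _ | B₁⟩ := y₁
  · exact .inr ⟨rfl, by simpa [filterMap_getLeft?_psiA] using h.filterMap Sum.getLeft?⟩
  left
  obtain ⟨r, hr⟩ := h
  obtain ⟨s₂, _ | B₂⟩ := y₂
  · have := congrArg (Sum.inr (Sum.inr MSym.lang) ∈ ·) hr
    simp [psiA_eq, encAnnTheta] at this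
  simp only [psiA_eq, encAnnTheta, List.append_assoc, List.cons_append, List.nil_append] at hr
  -- cut both sides first at the `⟨` ending the trace, then at the `⟩` ending the acceptance set
  obtain ⟨hs, hr⟩ :=
    List.eq_of_append_cons_eq_append_cons (p := Sum.isLeft) (by simp) (by simp) rfl hr
  obtain ⟨hB, -⟩ := List.eq_of_append_cons_eq_append_cons
    (p := fun c => decide (c ≠ Sum.inr (Sum.inr MSym.rang))) (by simp) (by simp) (by simp) hr
  rw [List.map_injective_iff.2 Sum.inl_injective hs, ← B₁.sort_toFinset (· ≤ ·),
    List.map_injective_iff.2 (Sum.inr_injective.comp Sum.inl_injective) hB,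
    Finset.sort_toFinset]

theorem inducedRel_of_psiA_prefix {y₁ y₂ : List α × Option (Finset α)}
    (h : psiA y₁ <+: psiA y₂) : inducedRel extLE accRel y₁ y₂ := by
  intro u hu
  rcases eq_or_prefix_of_psiA_prefix h with rfl | ⟨hnone, hpre⟩
  · exact ⟨u, hu, extLE_refl u⟩
  · obtain ⟨s, A⟩ := y₁
    obtain rfl : A = none := hnone
    exact ⟨unstableObs s, accRel_unstableObs s, extLE_unstableObs (hu.1 ▸ hpre)⟩

end Acceptances

theorem stmt10_general {α : Type} [Fintype α] [LinearOrder α] :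
    (∃ (n : ℕ) (A : NFA (Xi α ⊕ ThetaA α) (Fin n)),
      Recognises A (fun s t => ∃ (x : FLObs α) (y : List α × Option (Finset α)),
        s = phi x ∧ t = psiA y ∧ accRel x y)) ∧
    (∀ y₁ y₂ : List α × Option (Finset α),
      psiA y₁ <+: psiA y₂ → inducedRel extLE accRel y₁ y₂) := by
  refine ⟨?_, fun _ _ => Acceptances.inducedRel_of_psiA_prefix⟩
  obtain ⟨n, A, hA⟩ := (Acceptances.isRegular_accLanguage (α := α)).exists_nfa_fin
  refine ⟨n, A, fun s t => ?_⟩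
  simp only [hA, Acceptances.mem_accLanguage_iff]
  constructor
  · rintro ⟨x, ⟨_, _⟩, rfl, rfl, rfl, rfl⟩
    exact ⟨Acceptances.accWord x, ⟨x, rfl⟩, Acceptances.filterMap_getLeft?_accWord x,
      Acceptances.filterMap_getRight?_accWord x⟩
  · rintro ⟨_, ⟨x, rfl⟩, rfl, rfl⟩
    exact ⟨x, _, Acceptances.filterMap_getLeft?_accWord x,
      Acceptances.filterMap_getRight?_accWord x, rfl, rfl⟩

/-- The acceptances (ready sets) model `A` is rational: (a) there is an NFA with
finitely many states over `Ξ ⊕ Θ` recognising `{(φ x, ψ y) : (x, y) ∈ acc_Σ}`, and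
(b) `ψ` is order-reflecting: whenever `ψ y₁` is a prefix of `ψ y₂` then `y₁ ≼ y₂` in
the relation induced by `acc_Σ` from the extension order on `FL_Σ`. -/
theorem stmt10 {α : Type} [Fintype α] [Nonempty α] [LinearOrder α] :
    (∃ (n : ℕ) (A : NFA (Xi α ⊕ ThetaA α) (Fin n)),
      Recognises A (fun s t => ∃ (x : FLObs α) (y : List α × Option (Finset α)),
        s = phi x ∧ t = psiA y ∧ accRel x y)) ∧
    (∀ y₁ y₂ : List α × Option (Finset α),
      psiA y₁ <+: psiA y₂ → inducedRel extLE accRel y₁ y₂) :=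
  stmt10_general
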